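/- arXiv:1906.06824 — 2 statements merged into one kernel-verified Lean document; each statement's English description precedes it below -/
import Mathlib

section
/- Let V be a finite type and Q : Matrix V V ℕ. Suppose there is a permutation σ of V with P_σ * Q = Q * P_σ and Qᵀ = P_σ * Q, and suppose the spectral radius of Q (regarded as a complex matrix) is 2. Then there exist a symmetric matrix H : Matrix (V ⊕ V) (V ⊕ V) ℕ and a permutation τ of V ⊕ V with P_τ * H = H * P_τ, such that Matrix.fromBlocks Q 0 0 Q = P_τ * H and the spectral radius of H (regarded as a complex matrix) is 2. That is, Q is a pretzelization of a graph of spectral radius 2. -/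
open Matrix

/-- The permutation matrix of a permutation `σ`: `(P_σ) i j = 1` if `j = σ i`, else `0`. -/
def permMat {V : Type*} [DecidableEq V] (R : Type*) [Zero R] [One R]
    (σ : Equiv.Perm V) : Matrix V V R :=
  Matrix.of fun i j => if j = σ i then 1 else 0

/-!
The graph is the bipartite double `H = [[0, Q], [Qᵀ, 0]]`, and `τ` swaps the two copies of `V`,
twisting one of them by `σ⁻¹`, so that `P_τ = [[0, P_σ⁻¹], [1, 0]]`. Since `Qᵀ = P_σ Q` (hence also
`Q = Qᵀ P_σ⁻¹`), block multiplication gives `P_τ H = Q ⊕ Q = H P_τ`. As `P_τ` commutes with `H` and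
has finite order `n`, `(Q ⊕ Q)ⁿ = Hⁿ`; the spectral mapping theorem makes the spectral radius
commute with `n`-th powers, so `ρ(H) = ρ(Q ⊕ Q) = ρ(Q) = 2`.
-/

section PermMat

variable {V : Type*} [DecidableEq V]

theorem permMat_eq_permMatrix (R : Type*) [Zero R] [One R] (σ : Equiv.Perm V) :
    permMat R σ = σ.permMatrix R := by
  ext i j
  simp [permMat, PEquiv.toMatrix_apply, eq_comm]

theorem transpose_permMat (R : Type*) [Zero R] [One R] (σ : Equiv.Perm V) :
    (permMat R σ)ᵀ = permMat R σ⁻¹ := by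
  simp only [permMat_eq_permMatrix, transpose_permMatrix]

theorem map_permMat {R S : Type*} [NonAssocSemiring R] [NonAssocSemiring S] (f : R →+* S)
    (σ : Equiv.Perm V) : (permMat R σ).map f = permMat S σ := by
  ext i j
  simp only [permMat, map_apply, of_apply, apply_ite f, map_one, map_zero]

variable [Fintype V]

theorem permMat_mul_permMat {R : Type*} [NonAssocSemiring R] (σ τ : Equiv.Perm V) :
    permMat R σ * permMat R τ = permMat R (τ * σ) := by
  simp only [permMat_eq_permMatrix, permMatrix_mul]

theorem isOfFinOrder_permMat (R : Type*) [Semiring R] (σ : Equiv.Perm V) :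
    IsOfFinOrder (permMat R σ) := by
  simpa [permMat_eq_permMatrix] using
    (permMatrixHom (R := R)).isOfFinOrder (isOfFinOrder_of_finite σ⁻¹)

end PermMat

def sumTwist {V : Type*} (σ : Equiv.Perm V) : Equiv.Perm (V ⊕ V) :=
  (Equiv.sumCongr σ⁻¹ (Equiv.refl V)).trans (Equiv.sumComm V V)

theorem permMat_sumTwist {V : Type*} [DecidableEq V] (R : Type*) [Zero R] [One R]
    (σ : Equiv.Perm V) : permMat R (sumTwist σ) = fromBlocks 0 (permMat R σ⁻¹) 1 0 := by
  ext (i | i) (j | j) <;> simp [permMat, sumTwist, one_apply, eq_comm]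

section Pretzel

variable {V : Type*} [Fintype V] [DecidableEq V] {R : Type*} [CommSemiring R]
  {Q : Matrix V V R} {σ : Equiv.Perm V}

theorem permMat_inv_mul_transpose (hop : Qᵀ = permMat R σ * Q) : permMat R σ⁻¹ * Qᵀ = Q := by
  rw [hop, ← Matrix.mul_assoc, permMat_mul_permMat, mul_inv_cancel,
    permMat_eq_permMatrix, permMatrix_one, Matrix.one_mul]

theorem transpose_mul_permMat_inv (hop : Qᵀ = permMat R σ * Q) : Qᵀ * permMat R σ⁻¹ = Q := by
  simpa [transpose_mul, transpose_permMat] using (congrArg transpose hop).symm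

theorem permMat_sumTwist_mul_fromBlocks (hop : Qᵀ = permMat R σ * Q) :
    permMat R (sumTwist σ) * fromBlocks 0 Q Qᵀ 0 = fromBlocks Q 0 0 Q := by
  simp [permMat_sumTwist, fromBlocks_multiply, permMat_inv_mul_transpose hop]

theorem fromBlocks_mul_permMat_sumTwist (hop : Qᵀ = permMat R σ * Q) :
    fromBlocks 0 Q Qᵀ 0 * permMat R (sumTwist σ) = fromBlocks Q 0 0 Q := by
  simp [permMat_sumTwist, fromBlocks_multiply, transpose_mul_permMat_inv hop]

theorem commute_permMat_sumTwist (hop : Qᵀ = permMat R σ * Q) :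
    Commute (permMat R (sumTwist σ)) (fromBlocks 0 Q Qᵀ 0) :=
  (permMat_sumTwist_mul_fromBlocks hop).trans (fromBlocks_mul_permMat_sumTwist hop).symm

end Pretzel

section SpectralRadius

variable {𝕜 A : Type*} [NormedField 𝕜] [IsAlgClosed 𝕜] [Ring A] [Algebra 𝕜 A]

theorem spectralRadius_pow_of_pos (a : A) {n : ℕ} (hn : 0 < n) :
    spectralRadius 𝕜 (a ^ n) = spectralRadius 𝕜 a ^ n := by
  simp only [spectralRadius, spectrum.map_pow_of_pos a hn, iSup_image, nnnorm_pow,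
    ENNReal.coe_pow, ENNReal.iSup₂_pow_of_ne_zero _ hn.ne']

variable (𝕜) in
theorem spectralRadius_mul_of_commute_of_isOfFinOrder {u a : A} (hu : IsOfFinOrder u)
    (hua : Commute u a) : spectralRadius 𝕜 (u * a) = spectralRadius 𝕜 a := by
  obtain ⟨n, hn, hun⟩ := hu.exists_pow_eq_one
  apply (ENNReal.pow_right_strictMono hn.ne').injective
  simp only [← spectralRadius_pow_of_pos _ hn, hua.mul_pow, hun, one_mul]

end SpectralRadius

section BlockDiagonal

variable {m n : Type*} [Fintype m] [Fintype n] [DecidableEq m] [DecidableEq n]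

theorem spectrum_fromBlocks_zero_zero {K : Type*} [Field K] (A : Matrix m m K) (B : Matrix n n K) :
    spectrum K (fromBlocks A 0 0 B) = spectrum K A ∪ spectrum K B := by
  ext z
  have hblocks : algebraMap K _ z - fromBlocks A 0 0 B =
      fromBlocks (algebraMap K _ z - A) 0 0 (algebraMap K _ z - B) := by
    ext (i | i) (j | j) <;> simp [algebraMap_matrix_apply]
  simp only [spectrum.mem_iff, Set.mem_union, isUnit_iff_isUnit_det, hblocks,
    det_fromBlocks_zero₁₂, IsUnit.mul_iff, not_and_or]

theorem spectralRadius_fromBlocks_diag_self {K : Type*} [NormedField K] (A : Matrix m m K) :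
    spectralRadius K (fromBlocks A 0 0 A) = spectralRadius K A := by
  simp only [spectralRadius, spectrum_fromBlocks_zero_zero, Set.union_self]

end BlockDiagonal

theorem pretzelization_of_spectralRadius_two_general
    {V : Type*} [Fintype V] [DecidableEq V] (Q : Matrix V V ℕ)
    (σ : Equiv.Perm V)
    (hop : Qᵀ = permMat ℕ σ * Q)
    (hρ : spectralRadius ℂ (Q.map (fun x => (x : ℂ))) = 2) :
    ∃ (H : Matrix (V ⊕ V) (V ⊕ V) ℕ) (τ : Equiv.Perm (V ⊕ V)),
      Hᵀ = H ∧ permMat ℕ τ * H = H * permMat ℕ τ ∧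
      Matrix.fromBlocks Q 0 0 Q = permMat ℕ τ * H ∧
      spectralRadius ℂ (H.map (fun x => (x : ℂ))) = 2 := by
  refine ⟨fromBlocks 0 Q Qᵀ 0, sumTwist σ, by simp [fromBlocks_transpose],
    commute_permMat_sumTwist hop, (permMat_sumTwist_mul_fromBlocks hop).symm, ?_⟩
  have hopC : (Q.map (Nat.castRingHom ℂ))ᵀ = permMat ℂ σ * Q.map (Nat.castRingHom ℂ) := by
    simpa only [transpose_map, Matrix.map_mul, map_permMat] using
      congrArg (·.map (Nat.castRingHom ℂ)) hop
  have hmap : (fromBlocks 0 Q Qᵀ 0).map (fun x => (x : ℂ)) =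
      fromBlocks 0 (Q.map (Nat.castRingHom ℂ)) (Q.map (Nat.castRingHom ℂ))ᵀ 0 := by
    simp [fromBlocks_map, transpose_map]
  rw [hmap, ← spectralRadius_mul_of_commute_of_isOfFinOrder ℂ
    (isOfFinOrder_permMat ℂ (sumTwist σ)) (commute_permMat_sumTwist hopC), permMat_sumTwist_mul_fromBlocks hopC,
    spectralRadius_fromBlocks_diag_self]
  exact hρ

/-- If `Q^op = ^σQ` for some automorphism `σ` of `Q` and the spectral radius of `Q` is `2`,
then `Q` is a pretzelization of a graph of spectral radius `2`: the disjoint union `Q ∪ Q`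
is the twist, by an automorphism `τ`, of a symmetric matrix `H` of spectral radius `2`. -/
theorem pretzelization_of_spectralRadius_two
    {V : Type*} [Fintype V] [DecidableEq V] (Q : Matrix V V ℕ)
    (σ : Equiv.Perm V)
    (hcomm : permMat ℕ σ * Q = Q * permMat ℕ σ)
    (hop : Qᵀ = permMat ℕ σ * Q)
    (hρ : spectralRadius ℂ (Q.map (fun x => (x : ℂ))) = 2) :
    ∃ (H : Matrix (V ⊕ V) (V ⊕ V) ℕ) (τ : Equiv.Perm (V ⊕ V)),
      Hᵀ = H ∧ permMat ℕ τ * H = H * permMat ℕ τ ∧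
      Matrix.fromBlocks Q 0 0 Q = permMat ℕ τ * H ∧
      spectralRadius ℂ (H.map (fun x => (x : ℂ))) = 2 :=
  pretzelization_of_spectralRadius_two_general Q σ hop hρ
end

section
/- Let n ≥ 4 and let Q : Matrix (Fin (n+1)) (Fin (n+1)) ℂ be the adjacency matrix of the extended Dynkin graph D̃_n: Q i j = 1 (and Q j i = 1) exactly when the unordered pair {i, j} (of natural-number values) is {0, 2}, {1, 2}, {k, k+1} for some 2 ≤ k ≤ n−3, {n−2, n−1}, or {n−2, n}; and all other entries are 0. Then spectralRadius ℂ Q = 2. -/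
/-!
The vector `w` equal to `1` at the four end vertices `0, 1, n - 1, n` and to `2` elsewhere
satisfies `Q w = 2 w` (it is the null root of the affine root system `D̃_n`), so `2` lies in
the spectrum. Conversely, as `Q` is nonnegative and `w` positive, evaluating `Q u = μ u` at an
index maximizing `‖u j‖ / w j` gives `‖μ‖ ≤ 2` for every eigenvalue `μ`.
-/

open Matrix Finset
open scoped ENNReal

namespace Matrix

variable {ι : Type*} [Fintype ι]

theorem mem_spectrum_iff_exists_mulVec_eq_smul [DecidableEq ι] {K : Type*} [Field K]
    {A : Matrix ι ι K} {μ : K} : μ ∈ spectrum K A ↔ ∃ v ≠ 0, A *ᵥ v = μ • v := by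
  rw [← spectrum_toLin', ← Module.End.hasEigenvalue_iff_mem_spectrum]
  constructor
  · intro h
    obtain ⟨v, hv⟩ := h.exists_hasEigenvector
    exact ⟨v, hv.2, by simpa using hv.apply_eq_smul⟩
  · rintro ⟨v, hv, h⟩
    exact Module.End.hasEigenvalue_of_hasEigenvector
      ⟨Module.End.mem_eigenspace_iff.2 (by simpa using h), hv⟩

variable {𝕜 : Type*} [NormedField 𝕜]

theorem norm_le_of_weighted_row_sum_le {A : Matrix ι ι 𝕜} {w : ι → ℝ} {r : ℝ}
    (hw : ∀ i, 0 < w i) (hrow : ∀ i, ∑ j, ‖A i j‖ * w j ≤ r * w i)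
    {μ : 𝕜} {u : ι → 𝕜} (hu : u ≠ 0) (h : A *ᵥ u = μ • u) : ‖μ‖ ≤ r := by
  obtain ⟨k, hk⟩ := Function.ne_iff.1 hu
  obtain ⟨i, -, hmax⟩ := exists_max_image univ (fun j => ‖u j‖ / w j) ⟨k, mem_univ k⟩
  set c := ‖u i‖ / w i
  have hub (j : ι) : ‖u j‖ ≤ c * w j := (div_le_iff₀ (hw j)).1 (hmax j (mem_univ j))
  have hui : ‖u i‖ = c * w i := (div_mul_cancel₀ _ (hw i).ne').symm
  have hc : 0 < c := (div_pos (norm_pos_iff.2 hk) (hw k)).trans_le (hmax k (mem_univ k))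
  refine le_of_mul_le_mul_right ?_ (hui ▸ mul_pos hc (hw i))
  calc ‖μ‖ * ‖u i‖ = ‖∑ j, A i j * u j‖ := by
        rw [← norm_mul, ← smul_eq_mul, ← Pi.smul_apply, ← h]; rfl
    _ ≤ ∑ j, ‖A i j‖ * (c * w j) := by
        refine (norm_sum_le _ _).trans (sum_le_sum fun j _ => ?_)
        rw [norm_mul]
        exact mul_le_mul_of_nonneg_left (hub j) (norm_nonneg _)
    _ = c * ∑ j, ‖A i j‖ * w j := by
        rw [mul_sum]; exact sum_congr rfl fun j _ => by ring
    _ ≤ c * (r * w i) := mul_le_mul_of_nonneg_left (hrow i) hc.le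
    _ = r * ‖u i‖ := by rw [hui]; ring

theorem spectralRadius_le_of_weighted_row_sum_le [DecidableEq ι] {A : Matrix ι ι 𝕜}
    {w : ι → ℝ} {r : ℝ} (hw : ∀ i, 0 < w i) (hrow : ∀ i, ∑ j, ‖A i j‖ * w j ≤ r * w i) :
    spectralRadius 𝕜 A ≤ ENNReal.ofReal r := by
  refine iSup₂_le fun μ hμ => ?_
  obtain ⟨u, hu, h⟩ := mem_spectrum_iff_exists_mulVec_eq_smul.1 hμ
  rw [← enorm_eq_nnnorm, ← ofReal_norm]
  exact ENNReal.ofReal_le_ofReal (norm_le_of_weighted_row_sum_le hw hrow hu h)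

theorem spectralRadius_map_eq_of_mulVec_eq_smul [DecidableEq ι] [Nonempty ι] {K : Type*}
    [RCLike K] {B : Matrix ι ι ℝ} (hB : ∀ i j, 0 ≤ B i j) {w : ι → ℝ} (hw : ∀ i, 0 < w i)
    {r : ℝ} (h : B *ᵥ w = r • w) :
    spectralRadius K (B.map (algebraMap ℝ K)) = ENNReal.ofReal r := by
  have hrow (i : ι) : ∑ j, B i j * w j = r * w i := congrFun h i
  let i₀ : ι := Classical.arbitrary ι
  have hr : 0 ≤ r := nonneg_of_mul_nonneg_left
    (hrow i₀ ▸ sum_nonneg fun j _ => mul_nonneg (hB i₀ j) (hw j).le) (hw i₀)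
  have hmem : (r : K) ∈ spectrum K (B.map (algebraMap ℝ K)) := by
    refine mem_spectrum_iff_exists_mulVec_eq_smul.2 ⟨fun i => (w i : K), ?_, ?_⟩
    · exact Function.ne_iff.2 ⟨i₀, by simpa using (hw i₀).ne'⟩
    · ext i
      simpa [mulVec, dotProduct] using congrArg ((↑) : ℝ → K) (hrow i)
  refine le_antisymm (spectralRadius_le_of_weighted_row_sum_le hw fun i => ?_) ?_
  · simp [Real.norm_of_nonneg (hB _ _), hrow]
  · calc ENNReal.ofReal r = ‖(r : K)‖₊ := by
          rw [← enorm_eq_nnnorm, ← ofReal_norm, RCLike.norm_ofReal, abs_of_nonneg hr]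
      _ ≤ spectralRadius K (B.map (algebraMap ℝ K)) :=
          le_iSup₂ (f := fun μ (_ : μ ∈ spectrum K _) => (‖μ‖₊ : ℝ≥0∞)) _ hmem

end Matrix

namespace Dtilde

def Adj (n i j : ℕ) : Prop :=
  (i = 0 ∧ j = 2) ∨ (j = 0 ∧ i = 2) ∨
  (i = 1 ∧ j = 2) ∨ (j = 1 ∧ i = 2) ∨
  (2 ≤ i ∧ i ≤ n - 3 ∧ j = i + 1) ∨
  (2 ≤ j ∧ j ≤ n - 3 ∧ i = j + 1) ∨
  (i = n - 2 ∧ j = n - 1) ∨ (j = n - 2 ∧ i = n - 1) ∨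
  (i = n - 2 ∧ j = n) ∨ (j = n - 2 ∧ i = n)

instance (n : ℕ) : DecidableRel (Adj n) := fun i j => by
  unfold Adj; infer_instance

def neighbors (n i : ℕ) : Finset ℕ := {k ∈ range (n + 1) | Adj n i k}

def weight (n k : ℕ) : ℝ := if 2 ≤ k ∧ k ≤ n - 2 then 2 else 1

def adjMatrix (n : ℕ) : Matrix (Fin (n + 1)) (Fin (n + 1)) ℝ :=
  of fun i j => if Adj n i j then 1 else 0

variable {n i : ℕ}

theorem mem_neighbors {k : ℕ} : k ∈ neighbors n i ↔ k ≤ n ∧ Adj n i k := by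
  rw [neighbors, mem_filter, mem_range, Nat.lt_succ_iff]

theorem weight_pos (k : ℕ) : 0 < weight n k := by
  unfold weight; split_ifs <;> norm_num

theorem weight_of_mem_interior {k : ℕ} (h₁ : 2 ≤ k) (h₂ : k ≤ n - 2) : weight n k = 2 :=
  if_pos ⟨h₁, h₂⟩

theorem weight_of_le_one {k : ℕ} (h : k ≤ 1) : weight n k = 1 :=
  if_neg (by omega)

theorem weight_of_sub_one_le {k : ℕ} (h : n - 1 ≤ k) : weight n k = 1 :=
  if_neg (by omega)

theorem neighbors_of_le_one (hn : 4 ≤ n) (hi : i ≤ 1) : neighbors n i = {2} := by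
  ext k; rw [mem_neighbors, mem_singleton]; unfold Adj; grind

theorem neighbors_of_sub_one_le (hn : 4 ≤ n) (hi₁ : n - 1 ≤ i) (hi₂ : i ≤ n) :
    neighbors n i = {n - 2} := by
  ext k; rw [mem_neighbors, mem_singleton]; unfold Adj; grind

theorem sum_weight_lower_neighbors (hi₁ : 2 ≤ i) (hi₂ : i ≤ n - 2) :
    ∑ k ∈ neighbors n i with k < i, weight n k = 2 := by
  rcases hi₁.eq_or_lt with rfl | hi₁
  · rw [show {k ∈ neighbors n 2 | k < 2} = {0, 1} by
        ext k; rw [mem_filter, mem_neighbors, mem_insert, mem_singleton]; unfold Adj; grind,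
      sum_pair zero_ne_one, weight_of_le_one zero_le_one, weight_of_le_one le_rfl]
    norm_num
  · have hn : 5 ≤ n := by omega
    rw [show {k ∈ neighbors n i | k < i} = {i - 1} by
        ext k; rw [mem_filter, mem_neighbors, mem_singleton]; unfold Adj; grind,
      sum_singleton, weight_of_mem_interior (by omega) (by omega)]

theorem sum_weight_upper_neighbors (hi₁ : 2 ≤ i) (hi₂ : i ≤ n - 2) :
    ∑ k ∈ neighbors n i with ¬ k < i, weight n k = 2 := by
  rcases hi₂.eq_or_lt with rfl | hi₂
  · rw [show {k ∈ neighbors n (n - 2) | ¬ k < n - 2} = {n - 1, n} by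
        ext k; rw [mem_filter, mem_neighbors, mem_insert, mem_singleton]; unfold Adj; grind,
      sum_pair (by omega), weight_of_sub_one_le le_rfl,
      weight_of_sub_one_le (Nat.sub_le n 1)]
    norm_num
  · rw [show {k ∈ neighbors n i | ¬ k < i} = {i + 1} by
        ext k; rw [mem_filter, mem_neighbors, mem_singleton]; unfold Adj; grind,
      sum_singleton, weight_of_mem_interior (by omega) (by omega)]

theorem sum_weight_neighbors (hn : 4 ≤ n) (hi : i ≤ n) :
    ∑ k ∈ neighbors n i, weight n k = 2 * weight n i := by
  rcases (show i ≤ 1 ∨ n - 1 ≤ i ∨ 2 ≤ i ∧ i ≤ n - 2 by omega) with hi' | hi' | ⟨hi₁, hi₂⟩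
  · rw [neighbors_of_le_one hn hi', sum_singleton, weight_of_mem_interior le_rfl (by omega),
      weight_of_le_one hi']
    norm_num
  · rw [neighbors_of_sub_one_le hn hi' hi, sum_singleton,
      weight_of_mem_interior (by omega) le_rfl, weight_of_sub_one_le hi']
    norm_num
  · rw [← sum_filter_add_sum_filter_not _ (· < i), sum_weight_lower_neighbors hi₁ hi₂,
      sum_weight_upper_neighbors hi₁ hi₂, weight_of_mem_interior hi₁ hi₂]
    norm_num

theorem adjMatrix_nonneg (i j : Fin (n + 1)) : 0 ≤ adjMatrix n i j := by
  rw [adjMatrix, of_apply]; split_ifs <;> norm_num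

theorem adjMatrix_mulVec_weight (hn : 4 ≤ n) :
    adjMatrix n *ᵥ (fun i : Fin (n + 1) => weight n i) = (2 : ℝ) • fun i : Fin (n + 1) => weight n i := by
  ext i
  simp only [mulVec, dotProduct, adjMatrix, of_apply, ite_mul, one_mul, zero_mul,
    Pi.smul_apply, smul_eq_mul]
  rw [Fin.sum_univ_eq_sum_range (fun k => if Adj n i k then weight n k else 0), ← sum_filter]
  exact sum_weight_neighbors hn i.is_le

end Dtilde

/-- The adjacency matrix of the extended Dynkin graph `D̃_n` (for `n ≥ 4`) has spectral
radius `2`.  The graph `D̃_n` has vertices `0, 1, …, n`: vertices `0` and `1` are each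
joined to vertex `2`, there is a path `2 — 3 — ⋯ — (n-2)` (edges `{k, k+1}` for
`2 ≤ k ≤ n - 3`), and vertices `n-1` and `n` are each joined to vertex `n-2`. -/
theorem spectralRadius_Dtilde_eq_two
    (n : ℕ) (hn : 4 ≤ n)
    (Q : Matrix (Fin (n + 1)) (Fin (n + 1)) ℂ)
    (hQ : ∀ i j : Fin (n + 1), Q i j =
      if (i.val = 0 ∧ j.val = 2) ∨ (j.val = 0 ∧ i.val = 2) ∨
         (i.val = 1 ∧ j.val = 2) ∨ (j.val = 1 ∧ i.val = 2) ∨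
         (2 ≤ i.val ∧ i.val ≤ n - 3 ∧ j.val = i.val + 1) ∨
         (2 ≤ j.val ∧ j.val ≤ n - 3 ∧ i.val = j.val + 1) ∨
         (i.val = n - 2 ∧ j.val = n - 1) ∨ (j.val = n - 2 ∧ i.val = n - 1) ∨
         (i.val = n - 2 ∧ j.val = n) ∨ (j.val = n - 2 ∧ i.val = n)
      then 1 else 0) :
    spectralRadius ℂ Q = 2 := by
  have hQ' : Q = (Dtilde.adjMatrix n).map (algebraMap ℝ ℂ) := by
    ext i j
    rw [hQ, map_apply, Dtilde.adjMatrix, of_apply]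
    change (if Dtilde.Adj n i j then (1 : ℂ) else 0) = _
    split_ifs <;> simp
  rw [hQ', spectralRadius_map_eq_of_mulVec_eq_smul Dtilde.adjMatrix_nonneg (fun i => Dtilde.weight_pos i)
    (Dtilde.adjMatrix_mulVec_weight hn), ENNReal.ofReal_ofNat]
end
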